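/- arXiv:2506.02885 — 6 statements merged into one kernel-verified Lean document; each statement's English description precedes it below -/
import Mathlib

section
/- Let G be a finite non-nilpotent group. Then the intersection of the normalizers of all non-normal Sylow subgroups of G is a nilpotent normal subgroup of G. -/
/-! The intersection `D` normalizes every Sylow subgroup of `G` (a normal one has normalizer `G`),
so each Sylow subgroup of `D`, being the trace on `D` of a Sylow subgroup of `G`, is normal in `D`.
Conjugation permutes the non-normal Sylow subgroups, hence fixes `D`. -/

open Subgroup

section

variable {G : Type*} [Group G]

theorem Sylow.normal_of_normal_smul {p : ℕ} {g : G} {P : Sylow p G}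
    (h : (↑(g • P) : Subgroup G).Normal) : (P : Subgroup G).Normal := by
  have hP : g • P = P := by
    simpa using (Sylow.smul_eq_of_normal (g := g⁻¹) (P := g • P)).symm
  rwa [hP] at h

theorem isNilpotent_of_le_normalizer_sylow [Finite G] {H : Subgroup G}
    (h : ∀ p : ℕ, p.Prime → ∀ P : Sylow p G, H ≤ normalizer ((P : Subgroup G) : Set G)) :
    Group.IsNilpotent H := by
  refine (Group.isNilpotent_of_finite_tfae.out 3 0).mp fun p hp Q => ?_
  obtain ⟨P, hPQ⟩ := Q.exists_comap_subtype_eq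
  rw [← hPQ]
  exact normal_subgroupOf_of_le_normalizer (h p hp.out P)

variable (G) in
def nonNormalSylowNormalizers : Set (Subgroup G) :=
  {H | ∃ p : ℕ, p.Prime ∧ ∃ P : Sylow p G,
    ¬ (P : Subgroup G).Normal ∧ H = normalizer ((P : Subgroup G) : Set G)}

theorem sInf_nonNormalSylowNormalizers_le_normalizer {p : ℕ} (hp : p.Prime) (P : Sylow p G) :
    sInf (nonNormalSylowNormalizers G) ≤ normalizer ((P : Subgroup G) : Set G) := by
  by_cases hP : (P : Subgroup G).Normal
  · exact (normalizer_eq_top_iff.mpr hP).symm ▸ le_top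
  · exact sInf_le ⟨p, hp, P, hP, rfl⟩

theorem normal_sInf_nonNormalSylowNormalizers : (sInf (nonNormalSylowNormalizers G)).Normal := by
  refine ⟨fun n hn g => mem_sInf.mpr ?_⟩
  rintro _ ⟨p, hp, P, hP, rfl⟩
  have hn' : n • (g⁻¹ • P) = g⁻¹ • P :=
    Sylow.smul_eq_iff_mem_normalizer.mpr
      (mem_sInf.mp hn _ ⟨p, hp, g⁻¹ • P, mt Sylow.normal_of_normal_smul hP, rfl⟩)
  rw [P.coe_coe, ← Sylow.smul_eq_iff_mem_normalizer, mul_smul, mul_smul, hn', smul_inv_smul]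

end

theorem stmt1_general {G : Type*} [Group G] [Fintype G] :
    Group.IsNilpotent
      ↥(sInf {H : Subgroup G | ∃ (p : ℕ), p.Prime ∧ ∃ P : Sylow p G,
          ¬ (P : Subgroup G).Normal ∧ H = Subgroup.normalizer ((P : Subgroup G) : Set G)}) ∧
    (sInf {H : Subgroup G | ∃ (p : ℕ), p.Prime ∧ ∃ P : Sylow p G,
          ¬ (P : Subgroup G).Normal ∧ H = Subgroup.normalizer ((P : Subgroup G) : Set G)}).Normal :=
  ⟨isNilpotent_of_le_normalizer_sylow fun _ => sInf_nonNormalSylowNormalizers_le_normalizer,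
    normal_sInf_nonNormalSylowNormalizers⟩

theorem stmt1 {G : Type*} [Group G] [Fintype G] (hG : ¬ Group.IsNilpotent G) :
    Group.IsNilpotent
      ↥(sInf {H : Subgroup G | ∃ (p : ℕ), p.Prime ∧ ∃ P : Sylow p G,
          ¬ (P : Subgroup G).Normal ∧ H = Subgroup.normalizer ((P : Subgroup G) : Set G)}) ∧
    (sInf {H : Subgroup G | ∃ (p : ℕ), p.Prime ∧ ∃ P : Sylow p G,
          ¬ (P : Subgroup G).Normal ∧ H = Subgroup.normalizer ((P : Subgroup G) : Set G)}).Normal :=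
  stmt1_general
end

section
/- Let G be a finite non-nilpotent group and let N be the intersection of the normalizers of all non-normal Sylow subgroups of G. Then every Sylow subgroup of N is normal in G. -/
/-!
An element lies in `N` exactly when it normalizes every Sylow subgroup of `G`, since a normal
Sylow subgroup is normalized by everything; as conjugation permutes the Sylow subgroups, `N` is
normal in `G`. If `Q` is a Sylow `p`-subgroup of `N` and `P ≥ Q` a Sylow `p`-subgroup of `G`,
then `P ∩ N` is a `p`-subgroup of `N` containing `Q`, hence equal to it, and normalized by `N`.
So `Q` is a normal, hence characteristic, Sylow subgroup of the normal subgroup `N`.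
-/

open Subgroup

section

variable {G : Type*} [Group G]

theorem Sylow.normal_of_forall_le_normalizer {p : ℕ} {N : Subgroup G}
    (hN : ∀ P : Sylow p G, N ≤ normalizer (P : Subgroup G)) (Q : Sylow p N) :
    (Q : Subgroup N).Normal := by
  obtain ⟨P, hQP⟩ := (Q.isPGroup'.map N.subtype).exists_le_sylow
  have hQ_le : (Q : Subgroup N) ≤ (P : Subgroup G).subgroupOf N :=
    fun x hx ↦ mem_subgroupOf.mpr (hQP ⟨x, hx, rfl⟩)
  have hQ_eq : (P : Subgroup G).subgroupOf N = Q :=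
    Q.is_maximal' P.isPGroup'.comap_subtype hQ_le
  exact hQ_eq ▸ normal_subgroupOf_of_le_normalizer (hN P)

theorem Sylow.map_subtype_normal_of_forall_le_normalizer {p : ℕ} [Fact p.Prime] [Finite G]
    {N : Subgroup G} [N.Normal] (hN : ∀ P : Sylow p G, N ≤ normalizer (P : Subgroup G))
    (Q : Sylow p N) : ((Q : Subgroup N).map N.subtype).Normal :=
  have := Sylow.characteristic_of_normal Q (Sylow.normal_of_forall_le_normalizer hN Q)
  ConjAct.normal_of_characteristic_of_normal

variable (G) in
def nonnormalSylowNormalizers : Set (Subgroup G) :=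
  {H | ∃ p : ℕ, p.Prime ∧ ∃ P : Sylow p G,
    ¬ (P : Subgroup G).Normal ∧ H = normalizer ((P : Subgroup G) : Set G)}

theorem mem_sInf_nonnormalSylowNormalizers_iff {x : G} :
    x ∈ sInf (nonnormalSylowNormalizers G) ↔ ∀ p : ℕ, p.Prime → ∀ P : Sylow p G, x • P = P := by
  refine ⟨fun hx p hp P ↦ ?_, fun hx ↦ mem_sInf.mpr ?_⟩
  · by_cases hP : (P : Subgroup G).Normal
    · exact Sylow.smul_eq_of_normal
    · exact Sylow.smul_eq_iff_mem_normalizer.mpr (mem_sInf.mp hx _ ⟨p, hp, P, hP, rfl⟩)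
  · rintro - ⟨p, hp, P, -, rfl⟩
    exact Sylow.smul_eq_iff_mem_normalizer.mp (hx p hp P)

theorem normal_sInf_nonnormalSylowNormalizers : (sInf (nonnormalSylowNormalizers G)).Normal := by
  refine ⟨fun x hx g ↦ mem_sInf_nonnormalSylowNormalizers_iff.mpr fun p hp P ↦ ?_⟩
  have hx' := mem_sInf_nonnormalSylowNormalizers_iff.mp hx p hp (g⁻¹ • P)
  rw [mul_smul, mul_smul, hx', smul_inv_smul]

end

theorem stmt2_general {G : Type*} [Group G] [Fintype G]
    (N : Subgroup G)
    (hN : N = sInf {H : Subgroup G | ∃ (p : ℕ), p.Prime ∧ ∃ P : Sylow p G,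
          ¬ (P : Subgroup G).Normal ∧ H = Subgroup.normalizer ((P : Subgroup G) : Set G)}) :
    ∀ (p : ℕ), p.Prime → ∀ P : Sylow p ↥N,
      ((P : Subgroup ↥N).map N.subtype).Normal := by
  intro p hp Q
  have : Fact p.Prime := ⟨hp⟩
  have : N.Normal := hN ▸ normal_sInf_nonnormalSylowNormalizers
  refine Sylow.map_subtype_normal_of_forall_le_normalizer (fun P x hx ↦ ?_) Q
  rw [hN] at hx
  exact Sylow.smul_eq_iff_mem_normalizer.mp (mem_sInf_nonnormalSylowNormalizers_iff.mp hx p hp P)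

theorem stmt2 {G : Type*} [Group G] [Fintype G] (hG : ¬ Group.IsNilpotent G)
    (N : Subgroup G)
    (hN : N = sInf {H : Subgroup G | ∃ (p : ℕ), p.Prime ∧ ∃ P : Sylow p G,
          ¬ (P : Subgroup G).Normal ∧ H = Subgroup.normalizer ((P : Subgroup G) : Set G)}) :
    ∀ (p : ℕ), p.Prime → ∀ P : Sylow p ↥N,
      ((P : Subgroup ↥N).map N.subtype).Normal :=
  stmt2_general N hN
end

section
/- Let G be a finite group in which every maximal subgroup is nilpotent. Then G is solvable. -/
/-!
Induct on `|G|`. A nontrivial proper normal subgroup `N` lies in a maximal subgroup, so it is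
nilpotent, and `G ⧸ N` inherits the hypothesis because maximal subgroups of `G ⧸ N` are images
of maximal subgroups of `G`; hence `G` is solvable. It remains to rule out a simple, non-cyclic `G`.
There, the normalizer condition in the nilpotent maximal subgroups shows that an intersection of
two distinct maximal subgroups which is maximal among such intersections is normal, hence trivial:
distinct maximal subgroups intersect trivially, and they are self-normalizing. So the conjugates of
a maximal subgroup `M ≠ ⊥` cover exactly `|G| - |G : M| ≥ |G| / 2` nonidentity elements. These
cannot be all `|G| - 1` of them, so some nonidentity element lies in a maximal subgroup of another
conjugacy class, and the two classes together would cover at least `|G|` nonidentity elements.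
-/

open Pointwise

namespace Subgroup

variable {G : Type*} [Group G]

theorem lt_inf_normalizer_of_lt {D M : Subgroup G} [Group.IsNilpotent M] (h : D < M) :
    D < M ⊓ normalizer (D : Set G) := by
  have hD : D.subgroupOf M < ⊤ := by
    rw [lt_top_iff_ne_top, Ne, subgroupOf_eq_top]
    exact h.not_ge
  obtain ⟨x, hxN, hxD⟩ := SetLike.exists_of_lt (Group.normalizerCondition_of_isNilpotent _ hD)
  rw [← subgroupOf_normalizer_eq h.le, mem_subgroupOf] at hxN
  rw [mem_subgroupOf] at hxD
  exact SetLike.lt_iff_le_and_exists.2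
    ⟨le_inf h.le le_normalizer, (x : G), mem_inf.2 ⟨x.2, hxN⟩, hxD⟩

theorem inf_lt_left_of_isCoatom {M₁ M₂ : Subgroup G} (h₁ : IsCoatom M₁) (h₂ : IsCoatom M₂)
    (hne : M₁ ≠ M₂) : M₁ ⊓ M₂ < M₁ :=
  inf_lt_left.2 fun hle => hne ((h₁.le_iff_eq h₂.1).1 hle).symm

theorem isCoatom_of_mem_orbit_conjAct {M K : Subgroup G} (hM : IsCoatom M)
    (hK : K ∈ MulAction.orbit (ConjAct G) M) : IsCoatom K := by
  obtain ⟨g, rfl⟩ := hK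
  exact (OrderIso.isCoatom_iff
    { toEquiv := MulAction.toPerm g
      map_rel_iff' := pointwise_smul_le_pointwise_smul_iff } M).2 hM

theorem ncard_orbit_conjAct (H : Subgroup G) :
    (MulAction.orbit (ConjAct G) H).ncard = (normalizer (H : Set G)).index := by
  have : MulAction.stabilizer (ConjAct G) H =
      (normalizer (H : Set G)).comap (ConjAct.ofConjAct : ConjAct G ≃* G).toMonoidHom := by
    ext g
    exact conjAct_pointwise_smul_iff (g := ConjAct.ofConjAct g)
  rw [← MulAction.index_stabilizer, this,
    index_comap_of_surjective _ ConjAct.ofConjAct.surjective]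

def unionConjugatesDiffOne (H : Subgroup G) : Set G :=
  ⋃ K ∈ MulAction.orbit (ConjAct G) H, (K : Set G) \ {1}

theorem unionConjugatesDiffOne_subset (H : Subgroup G) : unionConjugatesDiffOne H ⊆ {1}ᶜ := by
  simp only [unionConjugatesDiffOne, Set.iUnion_subset_iff]
  exact fun _ _ => Set.sdiff_subset_compl _ _

theorem disjoint_diff_one_of_inf_eq_bot {K L : Subgroup G} (h : K ⊓ L = ⊥) :
    Disjoint ((K : Set G) \ {1}) ((L : Set G) \ {1}) :=
  Set.disjoint_left.2 fun x hxK hxL =>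
    hxK.2 (by simpa [h] using (mem_inf.2 ⟨hxK.1, hxL.1⟩ : x ∈ K ⊓ L))

theorem ncard_unionConjugatesDiffOne [Finite G] {H : Subgroup G}
    (hself : normalizer (H : Set G) = H)
    (hTI : (MulAction.orbit (ConjAct G) H).Pairwise fun K L => K ⊓ L = ⊥) :
    (unionConjugatesDiffOne H).ncard = Nat.card G - H.index := by
  have hcard : ∀ K ∈ MulAction.orbit (ConjAct G) H,
      ((K : Set G) \ {1}).ncard = 1 * (Nat.card H - 1) := by
    rintro - ⟨g, rfl⟩
    rw [Set.ncard_sdiff_singleton_of_mem (one_mem _), ← Nat.card_coe_set_eq, one_mul]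
    exact congrArg (· - 1) (Nat.card_congr (equivSMul g H).toEquiv.symm)
  have hdisj : (MulAction.orbit (ConjAct G) H).PairwiseDisjoint
      fun K : Subgroup G => (K : Set G) \ {1} :=
    hTI.mono' fun _ _ => disjoint_diff_one_of_inf_eq_bot
  rw [unionConjugatesDiffOne, (Set.toFinite _).ncard_biUnion (fun _ _ => Set.toFinite _) hdisj,
    finsum_mem_congr rfl hcard, ← finsum_mem_mul' _ _ (Set.toFinite _), finsum_one,
    ncard_orbit_conjAct, hself, ← card_mul_index H, Nat.mul_sub_one, mul_comm]

theorem exists_isCoatom_mem_of_not_isCyclic [Finite G] (hG : ¬IsCyclic G) {g : G}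
    (hg : g ≠ 1) : ∃ M : Subgroup G, IsCoatom M ∧ M ≠ ⊥ ∧ g ∈ M := by
  have : zpowers g ≠ ⊤ := fun h => hG (isCyclic_iff_exists_zpowers_eq_top.2 ⟨g, h⟩)
  obtain ⟨M, hM, hle⟩ := (eq_top_or_exists_le_coatom _).resolve_left this
  have hgM := hle (mem_zpowers g)
  exact ⟨M, hM, fun h => hg (by rwa [h, mem_bot] at hgM), hgM⟩

theorem normalizer_eq_self_of_isCoatom [IsSimpleGroup G] {M : Subgroup G} (hM : IsCoatom M)
    (hM' : M ≠ ⊥) : normalizer (M : Set G) = M := by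
  refine (le_normalizer.eq_or_lt.resolve_right fun hlt => ?_).symm
  have : M.Normal := normalizer_eq_top_iff.1 (hM.2 _ hlt)
  exact (IsSimpleGroup.eq_bot_or_eq_top_of_normal M this).elim hM' hM.1

theorem two_mul_index_le_card [Finite G] {M : Subgroup G} (hM : M ≠ ⊥) :
    2 * M.index ≤ Nat.card G := by
  rw [← card_mul_index M]
  exact Nat.mul_le_mul_right _ ((one_lt_card_iff_ne_bot M).2 hM)

section MaximalNilpotent

variable [Finite G] (hnil : ∀ M : Subgroup G, IsCoatom M → Group.IsNilpotent M)
include hnil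

theorem normal_of_maximal_inf_isCoatom {D : Subgroup G}
    (hD : Maximal (fun D => ∃ M₁ M₂, IsCoatom M₁ ∧ IsCoatom M₂ ∧ M₁ ≠ M₂ ∧ M₁ ⊓ M₂ = D) D) :
    D.Normal := by
  obtain ⟨⟨M₁, M₂, h₁, h₂, hne, rfl⟩, hmax⟩ := hD
  rw [← normalizer_eq_top_iff]
  by_contra hN
  obtain ⟨M, hM, hNM⟩ := (eq_top_or_exists_le_coatom _).resolve_left hN
  have eq_of_lt : ∀ K, IsCoatom K → M₁ ⊓ M₂ < K → K = M := fun K hK hlt => by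
    by_contra hKM
    have := hnil K hK
    have hlt' := (lt_inf_normalizer_of_lt hlt).trans_le (inf_le_inf_left K hNM)
    exact hlt'.not_ge (hmax ⟨K, M, hK, hM, hKM, rfl⟩ hlt'.le)
  exact hne ((eq_of_lt M₁ h₁ (inf_lt_left_of_isCoatom h₁ h₂ hne)).trans
    (eq_of_lt M₂ h₂ (inf_comm M₁ M₂ ▸ inf_lt_left_of_isCoatom h₂ h₁ hne.symm)).symm)

variable [IsSimpleGroup G]

theorem inf_eq_bot_of_isCoatom {M₁ M₂ : Subgroup G} (h₁ : IsCoatom M₁) (h₂ : IsCoatom M₂)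
    (hne : M₁ ≠ M₂) : M₁ ⊓ M₂ = ⊥ := by
  obtain ⟨D, hle, hD⟩ := Finite.exists_le_maximal (p := fun D : Subgroup G =>
    ∃ M₁ M₂, IsCoatom M₁ ∧ IsCoatom M₂ ∧ M₁ ≠ M₂ ∧ M₁ ⊓ M₂ = D) ⟨M₁, M₂, h₁, h₂, hne, rfl⟩
  have hDnormal := normal_of_maximal_inf_isCoatom hnil hD
  obtain ⟨N₁, N₂, hN₁, hN₂, hNne, rfl⟩ := hD.1
  have hDtop : N₁ ⊓ N₂ ≠ ⊤ := ((inf_lt_left_of_isCoatom hN₁ hN₂ hNne).trans_le le_top).ne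
  exact le_bot_iff.1 (hle.trans_eq
    ((IsSimpleGroup.eq_bot_or_eq_top_of_normal _ hDnormal).resolve_right hDtop))

theorem disjoint_unionConjugatesDiffOne {M₁ M₂ : Subgroup G} (h₁ : IsCoatom M₁)
    (h₂ : IsCoatom M₂) (h : M₂ ∉ MulAction.orbit (ConjAct G) M₁) :
    Disjoint (unionConjugatesDiffOne M₁) (unionConjugatesDiffOne M₂) := by
  simp only [unionConjugatesDiffOne, Set.disjoint_iUnion_left, Set.disjoint_iUnion_right]
  intro L hL K hK
  refine disjoint_diff_one_of_inf_eq_bot (inf_eq_bot_of_isCoatom hnil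
    (isCoatom_of_mem_orbit_conjAct h₁ hK) (isCoatom_of_mem_orbit_conjAct h₂ hL) ?_)
  rintro rfl
  exact h (MulAction.orbit_eq_iff.1 ((MulAction.orbit_eq_iff.2 hL).symm.trans
    (MulAction.orbit_eq_iff.2 hK)))

theorem ncard_unionConjugatesDiffOne_of_isCoatom {M : Subgroup G} (hM : IsCoatom M)
    (hM' : M ≠ ⊥) : (unionConjugatesDiffOne M).ncard = Nat.card G - M.index :=
  ncard_unionConjugatesDiffOne (normalizer_eq_self_of_isCoatom hM hM') fun _ hK _ hL =>
    inf_eq_bot_of_isCoatom hnil (isCoatom_of_mem_orbit_conjAct hM hK)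
      (isCoatom_of_mem_orbit_conjAct hM hL)

theorem isCyclic_of_isSimpleGroup : IsCyclic G := by
  by_contra hG
  have hcompl : ({1}ᶜ : Set G).ncard = Nat.card G - 1 := by
    rw [Set.ncard_compl, Set.ncard_singleton]
  obtain ⟨g₀, hg₀⟩ := exists_ne (1 : G)
  obtain ⟨M₁, hM₁, hM₁', -⟩ := exists_isCoatom_mem_of_not_isCyclic hG hg₀
  have hU₁ := ncard_unionConjugatesDiffOne_of_isCoatom hnil hM₁ hM₁'
  have hi₁ := two_mul_index_le_card hM₁'
  obtain ⟨g₁, hg₁, hg₁U⟩ : ∃ g ∈ ({1}ᶜ : Set G), g ∉ unionConjugatesDiffOne M₁ := by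
    refine Set.exists_mem_notMem_of_ncard_lt_ncard ?_
    have := one_lt_index_of_ne_top hM₁.1
    omega
  obtain ⟨M₂, hM₂, hM₂', hg₁M₂⟩ := exists_isCoatom_mem_of_not_isCyclic hG hg₁
  have hU₂ := ncard_unionConjugatesDiffOne_of_isCoatom hnil hM₂ hM₂'
  have hi₂ := two_mul_index_le_card hM₂'
  have hM₁₂ : M₂ ∉ MulAction.orbit (ConjAct G) M₁ := fun h =>
    hg₁U (Set.mem_biUnion h ⟨hg₁M₂, hg₁⟩)
  have hle := Set.ncard_le_ncard
    (Set.union_subset (unionConjugatesDiffOne_subset M₁) (unionConjugatesDiffOne_subset M₂))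
  rw [Set.ncard_union_eq (disjoint_unionConjugatesDiffOne hnil hM₁ hM₂ hM₁₂)] at hle
  have : 0 < Nat.card G := Nat.card_pos
  omega

end MaximalNilpotent

theorem forall_isCoatom_isNilpotent_of_surjective {H : Type*} [Group H] {f : G →* H}
    (hf : Function.Surjective f) (hnil : ∀ M : Subgroup G, IsCoatom M → Group.IsNilpotent M) :
    ∀ Q : Subgroup H, IsCoatom Q → Group.IsNilpotent Q := by
  intro Q hQ
  have := hnil _ (isCoatom_comap_of_surjective hf hQ)
  rw [← map_comap_eq_self_of_surjective hf Q]
  exact Group.nilpotent_of_surjective _ (f.subgroupMap_surjective _)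

theorem card_quotient_lt [Finite G] {N : Subgroup G} (hN : N ≠ ⊥) :
    Nat.card (G ⧸ N) < Nat.card G := by
  rw [← index_eq_card, ← N.index_mul_card]
  exact lt_mul_of_one_lt_right (Nat.pos_of_ne_zero index_ne_zero_of_finite)
    (N.one_lt_card_iff_ne_bot.mpr hN)

end Subgroup

open Subgroup in
theorem isSolvable_of_forall_isCoatom_isNilpotent {G : Type*} [hG : Group G] [Finite G]
    (hnil : ∀ M : Subgroup G, IsCoatom M → Group.IsNilpotent M) : Group.IsSolvable G := by
  induction G using Finite.induction_subsingleton_or_nontrivial generalizing hG with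
  | hbase => infer_instance
  | hstep G ih =>
    by_cases hsimple : IsSimpleGroup G
    · have := isCyclic_of_isSimpleGroup hnil
      exact Group.isSolvable_of_comm IsCyclic.commGroup.mul_comm
    obtain ⟨N, hN, hbot, htop⟩ : ∃ N : Subgroup G, N.Normal ∧ N ≠ ⊥ ∧ N ≠ ⊤ := by
      by_contra! h
      exact hsimple ⟨fun N hN => or_iff_not_imp_left.2 (h N hN)⟩
    obtain ⟨M, hM, hNM⟩ := (eq_top_or_exists_le_coatom N).resolve_left htop
    have := hnil M hM
    have : Group.IsSolvable N :=
      Group.isSolvable_of_isSolvable_injective (inclusion_injective hNM)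
    have : Group.IsSolvable (G ⧸ N) := ih _ (card_quotient_lt hbot)
      (forall_isCoatom_isNilpotent_of_surjective (QuotientGroup.mk'_surjective N) hnil)
    exact (Group.isSolvable_iff_subgroup_quotient N).2 ⟨inferInstance, inferInstance⟩

theorem stmt7 {G : Type*} [Group G] [Fintype G]
    (h : ∀ M : Subgroup G, IsCoatom M → Group.IsNilpotent ↥M) :
    IsSolvable G :=
  isSolvable_of_forall_isCoatom_isNilpotent h
end

section
/- Let G be a finite non-nilpotent group. Then the intersection of all non-normal maximal subgroups of G is nilpotent. -/
/-!
Let `L` be the intersection of the non-normal maximal subgroups; it is normal, being stable under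
conjugation. Let `Q` be a Sylow subgroup of `L`, and suppose its normalizer lies in a maximal
subgroup `M`. Then `K = L ⊓ M` is normal: it is `L` if `M` is not normal, and an intersection of
normal subgroups otherwise. As `Q` is also a Sylow subgroup of `K`, Frattini's argument gives
`G = N_G(Q) K ≤ M`, a contradiction. So every Sylow subgroup of `L` is normal and `L` is
nilpotent.
-/

open Subgroup

section

variable {G : Type*} [Group G]

theorem Subgroup.normal_sInf_of_comap_conj_mem {S : Set (Subgroup G)}
    (hS : ∀ (g : G), ∀ M ∈ S, M.comap (MulAut.conj g).toMonoidHom ∈ S) :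
    (sInf S).Normal where
  conj_mem n hn g := mem_sInf.mpr fun M hM => by
    simpa using mem_sInf.mp hn _ (hS g M hM)

theorem Subgroup.normal_sInf_setOf_isCoatom_and_not_normal :
    (sInf {M : Subgroup G | IsCoatom M ∧ ¬ M.Normal}).Normal :=
  normal_sInf_of_comap_conj_mem fun g _ ⟨hM, hMn⟩ =>
    ⟨(isCoatom_comap (MulAut.conj g)).mpr hM,
      (normal_comap_iff_of_surjective (MulAut.conj g).surjective).not.mpr hMn⟩

namespace Sylow

variable {p : ℕ} {K L : Subgroup G}

theorem exists_map_subtype_eq_of_le (hKL : K ≤ L) (P : Sylow p L) (hPK : P.map L.subtype ≤ K) :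
    ∃ R : Sylow p K, R.map K.subtype = P.map L.subtype := by
  obtain ⟨R, hR⟩ := (P.isPGroup'.map L.subtype).comap_of_injective K.subtype
    K.subtype_injective |>.exists_le_sylow
  have hRL : (R : Subgroup K).map K.subtype ≤ L := (map_subtype_le _).trans hKL
  have hPR : P.map L.subtype ≤ (R : Subgroup K).map K.subtype := by
    simpa [subgroupOf_map_subtype, inf_of_le_left hPK] using map_mono (f := K.subtype) hR
  have hRP : ((R : Subgroup K).map K.subtype).subgroupOf L = P := by
    refine P.is_maximal' ((R.isPGroup'.map _).comap_of_injective _ L.subtype_injective) ?_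
    rw [← comap_map_eq_self_of_injective L.subtype_injective (P : Subgroup L)]
    exact comap_mono hPR
  refine ⟨R, ?_⟩
  rw [← hRP, subgroupOf_map_subtype, inf_of_le_left hRL]

theorem normalizer_map_subtype_sup_eq_top [Fact p.Prime] [Finite G] [K.Normal] (hKL : K ≤ L)
    (P : Sylow p L) (hPK : P.map L.subtype ≤ K) : normalizer (P.map L.subtype) ⊔ K = ⊤ := by
  obtain ⟨R, hR⟩ := exists_map_subtype_eq_of_le hKL P hPK
  rw [← hR, normalizer_sup_eq_top]

theorem normal_of_forall_isCoatom_not_normal_le [Fact p.Prime] [Finite G] [L.Normal]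
    (hL : ∀ M : Subgroup G, IsCoatom M → ¬ M.Normal → L ≤ M) (P : Sylow p L) :
    (P : Subgroup L).Normal := by
  suffices normalizer ((P : Subgroup L).map L.subtype : Set G) = ⊤ from
    .of_map_subtype (normalizer_eq_top_iff.mp this)
  refine (eq_top_or_exists_le_coatom _).resolve_right fun ⟨M, hM, hNM⟩ =>
    hM.1 (top_le_iff.mp ?_)
  have hPM : P.map L.subtype ≤ M := le_normalizer.trans hNM
  have : (L ⊓ M).Normal := by
    by_cases hMn : M.Normal
    · exact normal_inf_normal L M
    · rwa [inf_of_le_left (hL M hM hMn)]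
  calc ⊤ = normalizer (P.map L.subtype) ⊔ (L ⊓ M) :=
        (normalizer_map_subtype_sup_eq_top inf_le_left P (le_inf (map_subtype_le _) hPM)).symm
    _ ≤ M := sup_le hNM inf_le_right

end Sylow

end

theorem stmt10_general {G : Type*} [Group G] [Fintype G] :
    Group.IsNilpotent
      ↥(sInf {M : Subgroup G | IsCoatom M ∧ ¬ M.Normal}) := by
  have := normal_sInf_setOf_isCoatom_and_not_normal (G := G)
  refine (Group.isNilpotent_of_finite_tfae.out 3 0).mp ?_
  intro p _ P
  exact Sylow.normal_of_forall_isCoatom_not_normal_le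
    (fun _ hM hMn => sInf_le (by exact ⟨hM, hMn⟩)) P

theorem stmt10 {G : Type*} [Group G] [Fintype G] (hG : ¬ Group.IsNilpotent G) :
    Group.IsNilpotent
      ↥(sInf {M : Subgroup G | IsCoatom M ∧ ¬ M.Normal}) :=
  stmt10_general
end

section
/- Let G = A₅ × Z₇. Then the intersection of all non-normal non-nilpotent maximal subgroups of G equals the factor Z₇ (which is nontrivial), while the Frattini subgroup of G is trivial. -/
set_option maxRecDepth 100000

open Equiv Equiv.Perm Subgroup
open scoped Pointwise

private abbrev A5 : Subgroup (Equiv.Perm (Fin 5)) := alternatingGroup (Fin 5)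
private abbrev Z7 := Multiplicative (ZMod 7)

private lemma A5_pretrans : MulAction.IsPretransitive ↥A5 (Fin 5) := ⟨by
  intro x y
  show ∃ g : ↥A5, g • x = y
  revert x y
  decide⟩

private lemma cardA5 : Nat.card ↥A5 = 60 := by
  have h := two_mul_card_alternatingGroup (α := Fin 5)
  have h2 : Fintype.card (Equiv.Perm (Fin 5)) = 120 := by
    rw [Fintype.card_perm]; decide
  rw [h2] at h
  rw [Nat.card_eq_fintype_card]
  have h3 : Fintype.card ↥A5 = Fintype.card ↥(alternatingGroup (Fin 5)) := by congr 1
  omega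

private def stab (i : Fin 5) : Subgroup ↥A5 := MulAction.stabilizer ↥A5 i

private lemma mem_stab_iff {i : Fin 5} {a : ↥A5} :
    a ∈ stab i ↔ (a : Equiv.Perm (Fin 5)) i = i := Iff.rfl

private lemma card_stab (i : Fin 5) : Nat.card ↥(stab i) = 12 := by
  haveI := A5_pretrans
  have h1 : (stab i).index = 5 := by
    have := MulAction.index_stabilizer_of_transitive (G := ↥A5) (x := i)
    simpa [stab] using this
  have h2 := Subgroup.card_mul_index (stab i)
  rw [cardA5, h1] at h2
  omega

private lemma coatom_stab (i : Fin 5) : IsCoatom (stab i) := by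
  constructor
  · intro h
    have := card_stab i
    rw [h, Subgroup.card_top, cardA5] at this
    omega
  · intro K hK
    have hd1 : Nat.card ↥K ∣ 60 := cardA5 ▸ Subgroup.card_subgroup_dvd_card K
    have hd2 : 12 ∣ Nat.card ↥K := (card_stab i) ▸ Subgroup.card_dvd_of_le hK.le
    have hne : Nat.card ↥K ≠ 12 := by
      intro h
      exact hK.ne (Subgroup.eq_of_le_of_card_ge hK.le (le_of_eq (h.trans (card_stab i).symm)))
    have hle : Nat.card ↥K ≤ 60 := Nat.le_of_dvd (by norm_num) hd1
    have hpos : 0 < Nat.card ↥K := Nat.card_pos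
    have hcard : Nat.card ↥K = 60 := by
      set n := Nat.card ↥K
      interval_cases n <;> revert hd1 hd2 hne <;> decide
    exact Subgroup.eq_top_of_le_card K (by rw [cardA5, hcard])

private def π (i : Fin 5) : ↥(stab i) →* Equiv.Perm (Fin 5) :=
  A5.subtype.comp (stab i).subtype

private lemma π_inj (i : Fin 5) : Function.Injective (π i) := by
  intro x y h
  apply Subtype.ext
  apply Subtype.ext
  exact h

private lemma not_nilpotent_stab (i : Fin 5) (a b : Equiv.Perm (Fin 5))
    (ha : a ∈ A5) (hai : a i = i) (hb : b ∈ A5) (hbi : b i = i)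
    (ha3 : a ^ 3 = 1)
    (hb3 : ¬(b = 1 ∨ b = a ∨ b = a * a))
    (hdec : ∀ σ : Equiv.Perm (Fin 5), σ ∈ A5 → σ i = i →
      (σ * a * σ⁻¹ = 1 ∨ σ * a * σ⁻¹ = a ∨ σ * a * σ⁻¹ = a * a) →
      (σ = 1 ∨ σ = a ∨ σ = a * a)) :
    ¬ Group.IsNilpotent ↥(stab i) := by
  intro hnil
  have hnc : NormalizerCondition ↥(stab i) := normalizerCondition_of_isNilpotent
  set aa : ↥(stab i) := ⟨⟨a, ha⟩, hai⟩ with haa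
  set bb : ↥(stab i) := ⟨⟨b, hb⟩, hbi⟩ with hbb
  have hπa : π i aa = a := rfl
  have key : ∀ k : ℤ, a ^ k = 1 ∨ a ^ k = a ∨ a ^ k = a * a := by
    intro k
    have h0 : a ^ (3 : ℤ) = 1 := by
      rw [show (3 : ℤ) = ((3 : ℕ) : ℤ) by norm_num, zpow_natCast, ha3]
    have hsplit : a ^ k = a ^ (k % 3) := by
      conv_lhs => rw [← Int.mul_ediv_add_emod k 3]
      rw [zpow_add, zpow_mul, h0, one_zpow, one_mul]
    rw [hsplit]
    have h2 : k % 3 = 0 ∨ k % 3 = 1 ∨ k % 3 = 2 := by omega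
    rcases h2 with h | h | h <;> rw [h]
    · left; exact zpow_zero a
    · right; left; exact zpow_one a
    · right; right
      rw [show (2 : ℤ) = ((2 : ℕ) : ℤ) by norm_num, zpow_natCast, pow_two]
  have memQ : ∀ x : ↥(stab i), x ∈ Subgroup.zpowers aa →
      (π i x = 1 ∨ π i x = a ∨ π i x = a * a) := by
    intro x hx
    obtain ⟨k, hk⟩ := Subgroup.mem_zpowers_iff.mp hx
    have : π i x = a ^ k := by rw [← hk, map_zpow, hπa]
    rw [this]
    exact key k
  have memQ' : ∀ x : ↥(stab i),
      (π i x = 1 ∨ π i x = a ∨ π i x = a * a) → x ∈ Subgroup.zpowers aa := by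
    intro x hx
    rcases hx with h | h | h
    · have : x = 1 := π_inj i (by rw [h, map_one])
      rw [this]; exact one_mem _
    · have : x = aa := π_inj i (by rw [h, hπa])
      rw [this]; exact Subgroup.mem_zpowers aa
    · have : x = aa * aa := π_inj i (by rw [map_mul, h, hπa])
      rw [this]; exact mul_mem (Subgroup.mem_zpowers aa) (Subgroup.mem_zpowers aa)
  have hQtop : Subgroup.zpowers aa < ⊤ := by
    rw [lt_top_iff_ne_top]
    intro h
    have hbQ : bb ∈ Subgroup.zpowers aa := h ▸ Subgroup.mem_top bb
    have := memQ bb hbQ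
    rw [show π i bb = b from rfl] at this
    exact hb3 this
  obtain ⟨x, hxn, hxQ⟩ := SetLike.exists_of_lt (hnc _ hQtop)
  have hconj : x * aa * x⁻¹ ∈ Subgroup.zpowers aa :=
    (Subgroup.mem_normalizer_iff.mp hxn aa).mp (Subgroup.mem_zpowers aa)
  have h1 := memQ _ hconj
  rw [map_mul, map_mul, map_inv, hπa] at h1
  have hxA : π i x ∈ A5 := (x : ↥A5).2
  have hxi : π i x i = i := x.2
  exact hxQ (memQ' x (hdec (π i x) hxA hxi h1))

private abbrev Gp := ↥A5 × Z7

private abbrev C : Subgroup Gp := (⊥ : Subgroup ↥A5).prod (⊤ : Subgroup Z7)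

private lemma C_comm : ∀ c ∈ C, ∀ y : Gp, c * y = y * c := by
  intro c hc y
  obtain ⟨c1, c2⟩ := c
  obtain ⟨h1, -⟩ := Subgroup.mem_prod.mp hc
  rw [Subgroup.mem_bot] at h1
  subst h1
  obtain ⟨y1, y2⟩ := y
  simp [Prod.ext_iff, mul_comm]

private instance C_normal : C.Normal := by
  constructor
  intro c hc g
  have h := C_comm c hc g
  have : g * c * g⁻¹ = c := by rw [← h]; group
  rw [this]
  exact hc

private lemma normal_of_coatom_not_le {M : Subgroup Gp} (hM : IsCoatom M)
    (hC : ¬ C ≤ M) : M.Normal := by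
  have hsup : M ⊔ C = ⊤ := hM.2 _ (left_lt_sup.mpr hC)
  constructor
  intro m hm g
  have hg : g ∈ (M : Set Gp) * (C : Set Gp) := by
    rw [← Subgroup.mul_normal M C, hsup]
    trivial
  obtain ⟨m₀, hm₀, c, hc, hgc⟩ := hg
  have hcm : c * m = m * c := C_comm c hc m
  have : g * m * g⁻¹ = m₀ * m * m₀⁻¹ := by
    rw [← hgc, mul_inv_rev]
    calc m₀ * c * m * (c⁻¹ * m₀⁻¹) = m₀ * (c * m) * c⁻¹ * m₀⁻¹ := by group
    _ = m₀ * (m * c) * c⁻¹ * m₀⁻¹ := by rw [hcm]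
    _ = m₀ * m * m₀⁻¹ := by group
  rw [this]
  exact mul_mem (mul_mem hm₀ hm) (inv_mem hm₀)

private lemma coatom_prod {M : Subgroup ↥A5} (hM : IsCoatom M) :
    IsCoatom (M.prod (⊤ : Subgroup Z7)) := by
  constructor
  · intro h
    apply hM.1
    rw [eq_top_iff]
    intro a _
    have : (a, (1 : Z7)) ∈ M.prod ⊤ := h ▸ Subgroup.mem_top _
    exact this.1
  · intro K hK
    have hCK : C ≤ K := le_trans (Subgroup.prod_mono bot_le le_rfl) hK.le
    set H := K.map (MonoidHom.fst ↥A5 Z7) with hH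
    have hKH : K = H.prod ⊤ := by
      apply le_antisymm
      · intro x hx
        exact ⟨⟨x, hx, rfl⟩, Subgroup.mem_top _⟩
      · rintro ⟨a, z⟩ ⟨ha, -⟩
        obtain ⟨y, hy, hfst⟩ := ha
        have h2 : ((1 : ↥A5), y.2⁻¹ * z) ∈ K := hCK ⟨Subgroup.mem_bot.mpr rfl, Subgroup.mem_top _⟩
        have h3 : (a, z) = y * ((1 : ↥A5), y.2⁻¹ * z) := by
          obtain ⟨y1, y2⟩ := y
          simp only [MonoidHom.coe_fst] at hfst
          simp [Prod.ext_iff, ← hfst]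
        rw [h3]
        exact mul_mem hy h2
    have hMH : M < H := by
      refine lt_of_le_of_ne ?_ ?_
      · intro a ha
        exact ⟨(a, 1), hK.le ⟨ha, Subgroup.mem_top _⟩, rfl⟩
      · intro h
        exact hK.ne (by rw [hKH, ← h])
    rw [hKH, hM.2 H hMH, Subgroup.top_prod_top]

private lemma not_normal_stab_prod (i : Fin 5) :
    ¬ ((stab i).prod (⊤ : Subgroup Z7)).Normal := by
  intro h
  have h2 : ((stab i).prod (⊤ : Subgroup Z7)).map (MonoidHom.fst ↥A5 Z7) = stab i := by
    apply le_antisymm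
    · rintro a ⟨⟨a', z⟩, ⟨hm, -⟩, rfl⟩
      exact hm
    · intro a ha
      exact ⟨(a, 1), ⟨ha, Subgroup.mem_top _⟩, rfl⟩
  have h3 : (stab i).Normal :=
    h2 ▸ h.map (MonoidHom.fst ↥A5 Z7) (fun b => ⟨(b, 1), rfl⟩)
  rcases h3.eq_bot_or_eq_top with h4 | h4
  · have := card_stab i
    rw [h4, Subgroup.card_bot] at this
    omega
  · have := card_stab i
    rw [h4, Subgroup.card_top, cardA5] at this
    omega

private lemma not_nilpotent_stab_prod (i : Fin 5) (h : ¬ Group.IsNilpotent ↥(stab i)) :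
    ¬ Group.IsNilpotent ↥((stab i).prod (⊤ : Subgroup Z7)) := by
  intro hn
  apply h
  let f : ↥((stab i).prod (⊤ : Subgroup Z7)) →* ↥(stab i) :=
    { toFun := fun x => ⟨x.1.1, x.2.1⟩
      map_one' := rfl
      map_mul' := fun x y => rfl }
  exact nilpotent_of_surjective f (fun a => ⟨⟨(a.1, 1), ⟨a.2, Subgroup.mem_top _⟩⟩, rfl⟩)

private lemma stab_inter {a : ↥A5} (h0 : a ∈ stab 0) (h1 : a ∈ stab 1) (h2 : a ∈ stab 2) :
    a = 1 := by
  have hd : ∀ σ : Equiv.Perm (Fin 5), Equiv.Perm.sign σ = 1 →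
      σ 0 = 0 → σ 1 = 1 → σ 2 = 2 → σ = 1 := by decide
  apply Subtype.ext
  exact hd a.1 (Equiv.Perm.mem_alternatingGroup.mp a.2)
    (mem_stab_iff.mp h0) (mem_stab_iff.mp h1) (mem_stab_iff.mp h2)

private lemma z7_gen : ∀ z : Z7, z ≠ 1 → ∀ w : Z7, ∃ k : Fin 7, z ^ (k : ℕ) = w := by decide

private abbrev T0 : Subgroup Gp := (⊤ : Subgroup ↥A5).prod (⊥ : Subgroup Z7)

private lemma coatom_T0 : IsCoatom T0 := by
  constructor
  · intro h
    have hmem : ((1 : ↥A5), Multiplicative.ofAdd (1 : ZMod 7)) ∈ T0 := h ▸ Subgroup.mem_top _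
    have h2 := (Subgroup.mem_prod.mp hmem).2
    rw [Subgroup.mem_bot] at h2
    exact (by decide : Multiplicative.ofAdd (1 : ZMod 7) ≠ 1) h2
  · intro K hK
    obtain ⟨⟨a, z⟩, hmem, hnot⟩ := SetLike.exists_of_lt hK
    have hz : z ≠ 1 := by
      intro h
      exact hnot ⟨Subgroup.mem_top _, by rw [h]; exact Subgroup.mem_bot.mpr rfl⟩
    have hz2 : ((1 : ↥A5), z) ∈ K := by
      have h1 : ((a : ↥A5), (1 : Z7)) ∈ K := hK.le ⟨Subgroup.mem_top _, Subgroup.mem_bot.mpr rfl⟩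
      have h2 := mul_mem (inv_mem h1) hmem
      have h3 : (a, (1:Z7))⁻¹ * (a, z) = ((1 : ↥A5), z) := by
        simp [Prod.ext_iff]
      rwa [h3] at h2
    rw [eq_top_iff]
    rintro ⟨b, w⟩ -
    obtain ⟨k, hk⟩ := z7_gen z hz w
    have hpow : ((1 : ↥A5), z) ^ (k : ℕ) ∈ K := pow_mem hz2 _
    have heq : ((1 : ↥A5), z) ^ (k : ℕ) = ((1 : ↥A5), w) := by
      rw [Prod.pow_mk, one_pow, hk]
    rw [heq] at hpow
    have hb : ((b : ↥A5), (1 : Z7)) ∈ K := hK.le ⟨Subgroup.mem_top _, Subgroup.mem_bot.mpr rfl⟩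
    have h4 := mul_mem hb hpow
    have h5 : ((b : ↥A5), (1 : Z7)) * ((1 : ↥A5), w) = (b, w) := by
      simp [Prod.ext_iff]
    rwa [h5] at h4

private lemma nn (i : Fin 5) (a b : Equiv.Perm (Fin 5)) (ha : Equiv.Perm.sign a = 1)
    (hai : a i = i) (hb : Equiv.Perm.sign b = 1) (hbi : b i = i) (ha3 : a ^ 3 = 1)
    (hb3 : ¬(b = 1 ∨ b = a ∨ b = a * a))
    (hdec : ∀ σ : Equiv.Perm (Fin 5), Equiv.Perm.sign σ = 1 → σ i = i →
      (σ * a * σ⁻¹ = 1 ∨ σ * a * σ⁻¹ = a ∨ σ * a * σ⁻¹ = a * a) →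
      (σ = 1 ∨ σ = a ∨ σ = a * a)) : ¬ Group.IsNilpotent ↥(stab i) :=
  not_nilpotent_stab i a b (Equiv.Perm.mem_alternatingGroup.mpr ha) hai
    (Equiv.Perm.mem_alternatingGroup.mpr hb) hbi ha3 hb3
    (fun σ hσ => hdec σ (Equiv.Perm.mem_alternatingGroup.mp hσ))

private lemma nn0 : ¬ Group.IsNilpotent ↥(stab 0) :=
  nn 0 (c[(1 : Fin 5), 2, 3]) (c[(1 : Fin 5), 2, 4]) (by decide) (by decide) (by decide)
    (by decide) (by decide) (by decide) (by decide)

private lemma nn1 : ¬ Group.IsNilpotent ↥(stab 1) :=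
  nn 1 (c[(0 : Fin 5), 2, 3]) (c[(0 : Fin 5), 2, 4]) (by decide) (by decide) (by decide)
    (by decide) (by decide) (by decide) (by decide)

private lemma nn2 : ¬ Group.IsNilpotent ↥(stab 2) :=
  nn 2 (c[(0 : Fin 5), 1, 3]) (c[(0 : Fin 5), 1, 4]) (by decide) (by decide) (by decide)
    (by decide) (by decide) (by decide) (by decide)

theorem stmt15 :
    sInf {M : Subgroup (↥(alternatingGroup (Fin 5)) × Multiplicative (ZMod 7)) |
        IsCoatom M ∧ ¬ M.Normal ∧ ¬ Group.IsNilpotent ↥M}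
      = Subgroup.prod ⊥ ⊤ ∧
    Subgroup.prod (⊥ : Subgroup ↥(alternatingGroup (Fin 5)))
        (⊤ : Subgroup (Multiplicative (ZMod 7))) ≠ ⊥ ∧
    frattini (↥(alternatingGroup (Fin 5)) × Multiplicative (ZMod 7)) = ⊥ := by
  have hmem : ∀ i : Fin 5, ¬ Group.IsNilpotent ↥(stab i) →
      ((stab i).prod (⊤ : Subgroup Z7)) ∈
        {M : Subgroup Gp | IsCoatom M ∧ ¬ M.Normal ∧ ¬ Group.IsNilpotent ↥M} :=
    fun i h => ⟨coatom_prod (coatom_stab i), not_normal_stab_prod i,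
      not_nilpotent_stab_prod i h⟩
  refine ⟨?_, ?_, ?_⟩
  · apply le_antisymm
    · intro x hx
      have h0 : x ∈ (stab 0).prod ⊤ := sInf_le (hmem 0 nn0) hx
      have h1 : x ∈ (stab 1).prod ⊤ := sInf_le (hmem 1 nn1) hx
      have h2 : x ∈ (stab 2).prod ⊤ := sInf_le (hmem 2 nn2) hx
      have ha : x.1 = 1 := stab_inter (Subgroup.mem_prod.mp h0).1
        (Subgroup.mem_prod.mp h1).1 (Subgroup.mem_prod.mp h2).1
      exact Subgroup.mem_prod.mpr ⟨Subgroup.mem_bot.mpr ha, Subgroup.mem_top _⟩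
    · apply le_sInf
      rintro M ⟨hco, hnn, -⟩
      by_contra h
      exact hnn (normal_of_coatom_not_le hco h)
  · intro h
    have hm : ((1 : ↥A5), Multiplicative.ofAdd (1 : ZMod 7)) ∈
        (⊥ : Subgroup ↥A5).prod (⊤ : Subgroup Z7) :=
      Subgroup.mem_prod.mpr ⟨Subgroup.mem_bot.mpr rfl, Subgroup.mem_top _⟩
    rw [h, Subgroup.mem_bot] at hm
    have h2 := congrArg Prod.snd hm
    exact (by decide : Multiplicative.ofAdd (1 : ZMod 7) ≠ (1 : Z7)) h2
  · rw [eq_bot_iff]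
    intro x hx
    have h0 : x ∈ (stab 0).prod ⊤ := frattini_le_coatom (coatom_prod (coatom_stab 0)) hx
    have h1 : x ∈ (stab 1).prod ⊤ := frattini_le_coatom (coatom_prod (coatom_stab 1)) hx
    have h2 : x ∈ (stab 2).prod ⊤ := frattini_le_coatom (coatom_prod (coatom_stab 2)) hx
    have hT : x ∈ T0 := frattini_le_coatom coatom_T0 hx
    have ha : x.1 = 1 := stab_inter (Subgroup.mem_prod.mp h0).1
      (Subgroup.mem_prod.mp h1).1 (Subgroup.mem_prod.mp h2).1
    have hz : x.2 = 1 := Subgroup.mem_bot.mp (Subgroup.mem_prod.mp hT).2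
    rw [Subgroup.mem_bot]
    exact Prod.ext ha hz
end

section
/- Let G be a finite non-solvable group, let N be the intersection of all non-nilpotent maximal subgroups of G containing the normalizer of some Sylow subgroup (so N is a normal subgroup of G), and let P be a Sylow p-subgroup of G. Then either P ∩ N ⊴ G or N_G(P ∩ N) lies in some nilpotent maximal subgroup of G. -/
/-- If `N` is normal in a finite group `G` and `P` is a Sylow `p`-subgroup of `G`,
then `p` does not divide the relative index of `P` in `N`. -/
lemma aux_not_dvd_relindex {G : Type*} [Group G] [Fintype G] {p : ℕ} [Fact p.Prime]
    (N : Subgroup G) [N.Normal] (P : Sylow p G) :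
    ¬ p ∣ (P : Subgroup G).relIndex N := by
  have hne : N.relIndex (P : Subgroup G) ≠ 0 := by
    have : Finite ((P : Subgroup G) ⧸ (N.subgroupOf (P : Subgroup G))) := Quotient.finite _
    exact Subgroup.index_ne_zero_of_finite
  have h1 : ((P : Subgroup G) ⊓ N).relIndex N * N.relIndex ((P : Subgroup G) ⊔ N)
      = ((P : Subgroup G) ⊓ N).relIndex ((P : Subgroup G) ⊔ N) :=
    Subgroup.relIndex_mul_relIndex _ _ _ inf_le_right le_sup_right
  have h2 : ((P : Subgroup G) ⊓ N).relIndex (P : Subgroup G)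
      * (P : Subgroup G).relIndex ((P : Subgroup G) ⊔ N)
      = ((P : Subgroup G) ⊓ N).relIndex ((P : Subgroup G) ⊔ N) :=
    Subgroup.relIndex_mul_relIndex _ _ _ inf_le_left le_sup_left
  rw [Subgroup.inf_relIndex_right, Subgroup.relIndex_sup_right, inf_comm] at h1
  rw [inf_comm, Subgroup.inf_relIndex_right] at h2
  have h3 : (P : Subgroup G).relIndex N = (P : Subgroup G).relIndex ((P : Subgroup G) ⊔ N) := by
    have := h1.trans h2.symm
    rw [mul_comm ((P : Subgroup G).relIndex N)] at this
    exact Nat.eq_of_mul_eq_mul_left (Nat.pos_of_ne_zero hne) this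
  haveI : ((P : Subgroup G)).FiniteIndex := ⟨Subgroup.index_ne_zero_of_finite⟩
  have h4 : ¬ p ∣ (P : Subgroup G).index := P.not_dvd_index
  intro hdvd
  exact h4 (dvd_trans (h3 ▸ hdvd) (Subgroup.relIndex_dvd_index_of_le le_sup_left))

/-- Frattini-type: for `N` normal, `G = N_G(P ⊓ N) ⊔ N`. -/
lemma aux_frattini {G : Type*} [Group G] [Fintype G] {p : ℕ} [Fact p.Prime]
    (N : Subgroup G) [N.Normal] (P : Sylow p G) :
    Subgroup.normalizer (((P : Subgroup G) ⊓ N : Subgroup G) : Set G) ⊔ N = ⊤ := by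
  have hpg : IsPGroup p (((P : Subgroup G) ⊓ N).subgroupOf N) :=
    (P.2.to_inf_left (K := N)).of_equiv (Subgroup.subgroupOfEquivOfLe inf_le_right).symm
  have hidx : ¬ p ∣ (((P : Subgroup G) ⊓ N).subgroupOf N).index := by
    have : (((P : Subgroup G) ⊓ N).subgroupOf N).index = ((P : Subgroup G) ⊓ N).relIndex N := rfl
    rw [this, Subgroup.inf_relIndex_right]
    exact aux_not_dvd_relindex N P
  let T : Sylow p ↥N := hpg.toSylow hidx
  have hT : (T : Subgroup ↥N).map N.subtype = (P : Subgroup G) ⊓ N := by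
    have : (T : Subgroup ↥N) = ((P : Subgroup G) ⊓ N).subgroupOf N := hpg.toSylow_coe hidx
    rw [this, Subgroup.subgroupOf_map_subtype, inf_assoc, inf_idem]
  have := Sylow.normalizer_sup_eq_top (G := G) (N := N) T
  rwa [hT] at this

theorem stmt17 {G : Type*} [Group G] [Fintype G] (hG : ¬ IsSolvable G)
    (N : Subgroup G) (hNormal : N.Normal)
    (hN : N = sInf {M : Subgroup G | IsCoatom M ∧ ¬ Group.IsNilpotent ↥M ∧
        ∃ (q : ℕ), q.Prime ∧ ∃ Q : Sylow q G, Subgroup.normalizer ((Q : Subgroup G) : Set G) ≤ M})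
    (p : ℕ) (hp : p.Prime) (P : Sylow p G) :
    ((P : Subgroup G) ⊓ N).Normal ∨
      ∃ M : Subgroup G, IsCoatom M ∧ Group.IsNilpotent ↥M ∧
        Subgroup.normalizer (((P : Subgroup G) ⊓ N : Subgroup G) : Set G) ≤ M := by
  haveI := Fact.mk hp
  haveI := hNormal
  by_cases hnorm : ((P : Subgroup G) ⊓ N).Normal
  · exact Or.inl hnorm
  · -- the normalizer is a proper subgroup, take a maximal subgroup above it
    have hne : Subgroup.normalizer (((P : Subgroup G) ⊓ N : Subgroup G) : Set G) ≠ ⊤ := fun h =>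
      hnorm (Subgroup.normalizer_eq_top_iff.mp h)
    obtain ⟨M, hM, hKM⟩ :=
      (eq_top_or_exists_le_coatom (Subgroup.normalizer (((P : Subgroup G) ⊓ N : Subgroup G) : Set G))).resolve_left hne
    by_cases hnil : Group.IsNilpotent ↥M
    · exact Or.inr ⟨M, hM, hnil, hKM⟩
    · exfalso
      -- N_G(P) ≤ N_G(P ⊓ N)
      have hPle : Subgroup.normalizer ((P : Subgroup G) : Set G) ≤ Subgroup.normalizer (((P : Subgroup G) ⊓ N : Subgroup G) : Set G) := by
        intro g hg
        rw [Subgroup.mem_normalizer_iff] at hg ⊢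
        intro n
        simp only [Subgroup.mem_inf]
        constructor
        · rintro ⟨h1, h2⟩
          exact ⟨(hg n).mp h1, hNormal.conj_mem n h2 g⟩
        · rintro ⟨h1, h2⟩
          refine ⟨(hg n).mpr h1, ?_⟩
          have := hNormal.conj_mem _ h2 g⁻¹
          simpa [mul_assoc] using this
      -- M belongs to the defining family, hence N ≤ M
      have hMmem : M ∈ {M : Subgroup G | IsCoatom M ∧ ¬ Group.IsNilpotent ↥M ∧
          ∃ (q : ℕ), q.Prime ∧ ∃ Q : Sylow q G, Subgroup.normalizer ((Q : Subgroup G) : Set G) ≤ M} :=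
        ⟨hM, hnil, p, hp, P, le_trans hPle hKM⟩
      have hNM : N ≤ M := hN ▸ sInf_le hMmem
      have htop : (⊤ : Subgroup G) ≤ M := by
        rw [← aux_frattini N P]
        exact sup_le hKM hNM
      exact hM.1 (top_le_iff.mp htop)
end
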